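/- arXiv:0905.1370 — 3 statements merged into one kernel-verified Lean document; each statement's English description precedes it below -/
import Mathlib

section
/- Let (V₀, ω₀) and (V₁, ω₁) be symplectic vector spaces and let Λ ⊆ V₀ × V₁ be a Lagrangian subspace with respect to the form (−ω₀) ⊕ ω₁. Then {v₁ ∈ V₁ : (0, v₁) ∈ Λ} equals the ω₁-symplectic complement of the projection of Λ to the second factor V₁, and {v₀ ∈ V₀ : (v₀, 0) ∈ Λ} equals the ω₀-symplectic complement of the projection of Λ to the first factor V₀. -/
open LinearMap Submodule

/-- The symplectic complement of a subspace `W` with respect to a bilinear form `ω`. -/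
def symplComp {V : Type*} [AddCommGroup V] [Module ℝ V]
    (ω : V →ₗ[ℝ] V →ₗ[ℝ] ℝ) (W : Submodule ℝ V) : Submodule ℝ V where
  carrier := {v | ∀ w ∈ W, ω v w = 0}
  zero_mem' := by intro w _; simp
  add_mem' := by intro a b ha hb w hw; simp [ha w hw, hb w hw]
  smul_mem' := by intro c a ha w hw; simp [ha w hw]

/-- `ω` is a (linear) symplectic form: alternating and nondegenerate. -/
structure IsSymplecticForm {V : Type*} [AddCommGroup V] [Module ℝ V]
    (ω : V →ₗ[ℝ] V →ₗ[ℝ] ℝ) : Prop where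
  alternating : ∀ v, ω v v = 0
  nondeg : ∀ v, (∀ w, ω v w = 0) → v = 0

/-- A subspace is Lagrangian iff it equals its symplectic complement. -/
def IsLagrangian {V : Type*} [AddCommGroup V] [Module ℝ V]
    (ω : V →ₗ[ℝ] V →ₗ[ℝ] ℝ) (Λ : Submodule ℝ V) : Prop :=
  Λ = symplComp ω Λ

/-- The symplectic form `(−ω₀) ⊕ ω₁` on `V₀ × V₁`. -/
def prodFormNegPos {V₀ V₁ : Type*} [AddCommGroup V₀] [Module ℝ V₀]
    [AddCommGroup V₁] [Module ℝ V₁]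
    (ω₀ : V₀ →ₗ[ℝ] V₀ →ₗ[ℝ] ℝ) (ω₁ : V₁ →ₗ[ℝ] V₁ →ₗ[ℝ] ℝ) :
    (V₀ × V₁) →ₗ[ℝ] (V₀ × V₁) →ₗ[ℝ] ℝ :=
  LinearMap.mk₂ ℝ (fun x y => - ω₀ x.1 y.1 + ω₁ x.2 y.2)
    (by intro x x' y
        simp only [Prod.fst_add, Prod.snd_add, map_add, LinearMap.add_apply]; ring)
    (by intro c x y
        simp only [Prod.smul_fst, Prod.smul_snd, map_smul, LinearMap.smul_apply,
          smul_eq_mul]; ring)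
    (by intro x y y'
        simp only [Prod.fst_add, Prod.snd_add, map_add, LinearMap.add_apply]; ring)
    (by intro c x y
        simp only [Prod.smul_fst, Prod.smul_snd, map_smul, LinearMap.smul_apply,
          smul_eq_mul]; ring)

/-- The symplectic form `ω₀₁₁₂ = (−ω₀) ⊕ ω₁ ⊕ (−ω₁) ⊕ ω₂` on `(V₀ × V₁) × (V₁ × V₂)`. -/
def form0112 {V₀ V₁ V₂ : Type*} [AddCommGroup V₀] [Module ℝ V₀]
    [AddCommGroup V₁] [Module ℝ V₁] [AddCommGroup V₂] [Module ℝ V₂]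
    (ω₀ : V₀ →ₗ[ℝ] V₀ →ₗ[ℝ] ℝ) (ω₁ : V₁ →ₗ[ℝ] V₁ →ₗ[ℝ] ℝ)
    (ω₂ : V₂ →ₗ[ℝ] V₂ →ₗ[ℝ] ℝ) :
    ((V₀ × V₁) × (V₁ × V₂)) →ₗ[ℝ] ((V₀ × V₁) × (V₁ × V₂)) →ₗ[ℝ] ℝ :=
  LinearMap.mk₂ ℝ
    (fun x y => - ω₀ x.1.1 y.1.1 + ω₁ x.1.2 y.1.2 - ω₁ x.2.1 y.2.1 + ω₂ x.2.2 y.2.2)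
    (by intro x x' y
        simp only [Prod.fst_add, Prod.snd_add, map_add, LinearMap.add_apply]; ring)
    (by intro c x y
        simp only [Prod.smul_fst, Prod.smul_snd, map_smul, LinearMap.smul_apply,
          smul_eq_mul]; ring)
    (by intro x y y'
        simp only [Prod.fst_add, Prod.snd_add, map_add, LinearMap.add_apply]; ring)
    (by intro c x y
        simp only [Prod.smul_fst, Prod.smul_snd, map_smul, LinearMap.smul_apply,
          smul_eq_mul]; ring)

/-- `K = V₀ × Δ₁ × V₂`, the product of the full spaces with the diagonal of `V₁`. -/
def Kdiag {V₀ V₁ V₂ : Type*} [AddCommGroup V₀] [Module ℝ V₀]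
    [AddCommGroup V₁] [Module ℝ V₁] [AddCommGroup V₂] [Module ℝ V₂] :
    Submodule ℝ ((V₀ × V₁) × (V₁ × V₂)) where
  carrier := {x | x.1.2 = x.2.1}
  zero_mem' := rfl
  add_mem' := by
    intro a b ha hb
    simp only [Set.mem_setOf_eq] at ha hb ⊢
    show a.1.2 + b.1.2 = a.2.1 + b.2.1
    rw [ha, hb]
  smul_mem' := by
    intro c a ha
    simp only [Set.mem_setOf_eq] at ha ⊢
    show c • a.1.2 = c • a.2.1
    rw [ha]

/-- The projection `π₀₂ : V₀ × V₁ × V₁ × V₂ → V₀ × V₂` onto the outer factors. -/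
def proj02 {V₀ V₁ V₂ : Type*} [AddCommGroup V₀] [Module ℝ V₀]
    [AddCommGroup V₁] [Module ℝ V₁] [AddCommGroup V₂] [Module ℝ V₂] :
    ((V₀ × V₁) × (V₁ × V₂)) →ₗ[ℝ] V₀ × V₂ where
  toFun x := (x.1.1, x.2.2)
  map_add' _ _ := rfl
  map_smul' _ _ := rfl

/-! Paired with `(0, v₁)`, the form `(−ω₀) ⊕ ω₁` only sees second components, so
`(0, v₁) ∈ Λ^ω` iff `v₁` is `ω₁`-orthogonal to the projection of `Λ` to `V₁`; symmetrically
for `(v₀, 0)`. For a Lagrangian `Λ` one may replace `Λ^ω` by `Λ`. -/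

section

variable {V : Type*} [AddCommGroup V] [Module ℝ V]

theorem mem_symplComp {ω : V →ₗ[ℝ] V →ₗ[ℝ] ℝ} {W : Submodule ℝ V} {v : V} :
    v ∈ symplComp ω W ↔ ∀ w ∈ W, ω v w = 0 :=
  Iff.rfl

end

section

variable {V₀ V₁ : Type*} [AddCommGroup V₀] [Module ℝ V₀] [AddCommGroup V₁] [Module ℝ V₁]
  (ω₀ : V₀ →ₗ[ℝ] V₀ →ₗ[ℝ] ℝ) (ω₁ : V₁ →ₗ[ℝ] V₁ →ₗ[ℝ] ℝ)

@[simp]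
theorem prodFormNegPos_apply (x y : V₀ × V₁) :
    prodFormNegPos ω₀ ω₁ x y = -ω₀ x.1 y.1 + ω₁ x.2 y.2 :=
  rfl

theorem comap_inr_symplComp_prodFormNegPos (Λ : Submodule ℝ (V₀ × V₁)) :
    comap (inr ℝ V₀ V₁) (symplComp (prodFormNegPos ω₀ ω₁) Λ)
      = symplComp ω₁ (map (snd ℝ V₀ V₁) Λ) := by
  ext v
  simp [mem_symplComp, forall_comm (α := V₀)]

theorem comap_inl_symplComp_prodFormNegPos (Λ : Submodule ℝ (V₀ × V₁)) :
    comap (inl ℝ V₀ V₁) (symplComp (prodFormNegPos ω₀ ω₁) Λ)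
      = symplComp ω₀ (map (fst ℝ V₀ V₁) Λ) := by
  ext v
  simp [mem_symplComp]

end

theorem statement0_general {V₀ V₁ : Type*}
    [AddCommGroup V₀] [Module ℝ V₀]
    [AddCommGroup V₁] [Module ℝ V₁]
    (ω₀ : V₀ →ₗ[ℝ] V₀ →ₗ[ℝ] ℝ) (ω₁ : V₁ →ₗ[ℝ] V₁ →ₗ[ℝ] ℝ)
    (Λ : Submodule ℝ (V₀ × V₁))
    (hΛ : IsLagrangian (prodFormNegPos ω₀ ω₁) Λ) :
    Submodule.comap (LinearMap.inr ℝ V₀ V₁) Λ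
      = symplComp ω₁ (Submodule.map (LinearMap.snd ℝ V₀ V₁) Λ) ∧
    Submodule.comap (LinearMap.inl ℝ V₀ V₁) Λ
      = symplComp ω₀ (Submodule.map (LinearMap.fst ℝ V₀ V₁) Λ) := by
  constructor
  · conv_lhs => rw [hΛ]
    exact comap_inr_symplComp_prodFormNegPos ω₀ ω₁ Λ
  · conv_lhs => rw [hΛ]
    exact comap_inl_symplComp_prodFormNegPos ω₀ ω₁ Λ

theorem statement0 {V₀ V₁ : Type*}
    [AddCommGroup V₀] [Module ℝ V₀] [FiniteDimensional ℝ V₀]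
    [AddCommGroup V₁] [Module ℝ V₁] [FiniteDimensional ℝ V₁]
    (ω₀ : V₀ →ₗ[ℝ] V₀ →ₗ[ℝ] ℝ) (ω₁ : V₁ →ₗ[ℝ] V₁ →ₗ[ℝ] ℝ)
    (hω₀ : IsSymplecticForm ω₀) (hω₁ : IsSymplecticForm ω₁)
    (Λ : Submodule ℝ (V₀ × V₁))
    (hΛ : IsLagrangian (prodFormNegPos ω₀ ω₁) Λ) :
    Submodule.comap (LinearMap.inr ℝ V₀ V₁) Λ
      = symplComp ω₁ (Submodule.map (LinearMap.snd ℝ V₀ V₁) Λ) ∧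
    Submodule.comap (LinearMap.inl ℝ V₀ V₁) Λ
      = symplComp ω₀ (Submodule.map (LinearMap.fst ℝ V₀ V₁) Λ) :=
  statement0_general ω₀ ω₁ Λ hΛ
end

section
/- Let (V₀, ω₀), (V₁, ω₁), (V₂, ω₂) be symplectic vector spaces and let Λ ⊆ V₀ × V₁ × V₁ × V₂ be a Lagrangian subspace for ω₀₁₁₂ satisfying Λ + K = V₀ × V₁ × V₁ × V₂, and set Λ₀₂ := π₀₂(Λ ∩ K) ⊆ V₀ × V₂. Then there exists a unique linear map ℓ : Λ₀₂ → V₁ such that Λ ∩ K = {(v₀, ℓ(v₀,v₂), ℓ(v₀,v₂), v₂) : (v₀, v₂) ∈ Λ₀₂}; in particular, for every (v₀,v₂) ∈ Λ₀₂ there is a unique v₁ ∈ V₁ with (v₀, v₁, v₁, v₂) ∈ Λ. -/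
open LinearMap Submodule

theorem symplComp_sup {V : Type*} [AddCommGroup V] [Module ℝ V]
    (ω : V →ₗ[ℝ] V →ₗ[ℝ] ℝ) (W W' : Submodule ℝ V) :
    symplComp ω (W ⊔ W') = symplComp ω W ⊓ symplComp ω W' := by
  ext v
  constructor
  · intro hv
    exact ⟨fun w hw => hv w (mem_sup_left hw), fun w hw => hv w (mem_sup_right hw)⟩
  · rintro ⟨hv, hv'⟩ w hw
    obtain ⟨a, ha, b, hb, rfl⟩ := mem_sup.mp hw
    rw [map_add, hv a ha, hv' b hb, add_zero]

section

variable {V₀ V₁ V₂ : Type*} [AddCommGroup V₀] [Module ℝ V₀]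
  [AddCommGroup V₁] [Module ℝ V₁] [AddCommGroup V₂] [Module ℝ V₂]

theorem diag_mem_symplComp_Kdiag (ω₀ : V₀ →ₗ[ℝ] V₀ →ₗ[ℝ] ℝ) (ω₁ : V₁ →ₗ[ℝ] V₁ →ₗ[ℝ] ℝ)
    (ω₂ : V₂ →ₗ[ℝ] V₂ →ₗ[ℝ] ℝ) (v : V₁) :
    (((0 : V₀), v), (v, (0 : V₂))) ∈ symplComp (form0112 ω₀ ω₁ ω₂) Kdiag := by
  intro y hy
  have hy : y.1.2 = y.2.1 := hy
  simp [form0112, hy]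

/-- Transversality `Λ + K = V` makes `(0, v, v, 0)`, which is orthogonal to both `Λ` and `K`,
orthogonal to everything; in particular to `(0, w, 0, 0)`, which pairs with it to `ω₁ v w`. -/
theorem eq_zero_of_diag_mem {ω₀ : V₀ →ₗ[ℝ] V₀ →ₗ[ℝ] ℝ} {ω₁ : V₁ →ₗ[ℝ] V₁ →ₗ[ℝ] ℝ}
    {ω₂ : V₂ →ₗ[ℝ] V₂ →ₗ[ℝ] ℝ} (hω₁ : IsSymplecticForm ω₁)
    {Λ : Submodule ℝ ((V₀ × V₁) × (V₁ × V₂))}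
    (hΛ : Λ ≤ symplComp (form0112 ω₀ ω₁ ω₂) Λ) (htrans : Λ ⊔ Kdiag = ⊤) {v : V₁}
    (hv : (((0 : V₀), v), (v, (0 : V₂))) ∈ Λ) : v = 0 := by
  have horth : (((0 : V₀), v), (v, (0 : V₂))) ∈ symplComp (form0112 ω₀ ω₁ ω₂) ⊤ := by
    rw [← htrans, symplComp_sup]
    exact ⟨hΛ hv, diag_mem_symplComp_Kdiag ω₀ ω₁ ω₂ v⟩
  refine hω₁.nondeg v fun w => ?_
  simpa [form0112] using horth (((0 : V₀), w), ((0 : V₁), (0 : V₂))) trivial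

theorem eq_of_mem_Kdiag {x : (V₀ × V₁) × (V₁ × V₂)} (hx : x ∈ Kdiag) :
    x = ((x.1.1, x.1.2), (x.1.2, x.2.2)) :=
  Prod.ext rfl (Prod.ext (Eq.symm hx) rfl)

variable {S : Submodule ℝ ((V₀ × V₁) × (V₁ × V₂))}

theorem eq_of_diag_mem_of_mem
    (hS : ∀ v : V₁, (((0 : V₀), v), (v, (0 : V₂))) ∈ S → v = 0)
    {a : V₀} {b : V₂} {u v : V₁} (hu : ((a, u), (u, b)) ∈ S) (hv : ((a, v), (v, b)) ∈ S) :
    u = v := by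
  have hdiff : (((0 : V₀), u - v), (u - v, (0 : V₂))) ∈ S := by
    simpa using sub_mem hu hv
  exact sub_eq_zero.mp (hS _ hdiff)

theorem exists_mem_of_mem_map_proj02 (hSK : S ≤ Kdiag) {p : V₀ × V₂}
    (hp : p ∈ S.map proj02) : ∃ v : V₁, ((p.1, v), (v, p.2)) ∈ S := by
  obtain ⟨x, hx, rfl⟩ := hp
  exact ⟨x.1.2, eq_of_mem_Kdiag (hSK hx) ▸ hx⟩

theorem existsUnique_mem_of_mem_map_proj02 (hSK : S ≤ Kdiag)
    (hS : ∀ v : V₁, (((0 : V₀), v), (v, (0 : V₂))) ∈ S → v = 0)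
    {p : V₀ × V₂} (hp : p ∈ S.map proj02) : ∃! v : V₁, ((p.1, v), (v, p.2)) ∈ S := by
  obtain ⟨v, hv⟩ := exists_mem_of_mem_map_proj02 hSK hp
  exact ⟨v, hv, fun w hw => eq_of_diag_mem_of_mem hS hw hv⟩

theorem existsUnique_linearMap_eq_graph (hSK : S ≤ Kdiag)
    (hS : ∀ v : V₁, (((0 : V₀), v), (v, (0 : V₂))) ∈ S → v = 0) :
    ∃! ℓ : ↥(S.map proj02) →ₗ[ℝ] V₁,
      (S : Set ((V₀ × V₁) × (V₁ × V₂)))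
        = {x | ∃ p : ↥(S.map proj02), x = ((p.val.1, ℓ p), (ℓ p, p.val.2))} := by
  choose f hf using fun p : ↥(S.map proj02) => exists_mem_of_mem_map_proj02 hSK p.2
  -- `f` is linear since `S` is closed under the linear operations and fibres are singletons.
  let ℓ : ↥(S.map proj02) →ₗ[ℝ] V₁ :=
    { toFun := f
      map_add' := fun p q =>
        eq_of_diag_mem_of_mem hS (hf (p + q)) (by simpa using add_mem (hf p) (hf q))
      map_smul' := fun c p =>
        eq_of_diag_mem_of_mem hS (hf (c • p)) (by simpa using smul_mem S c (hf p)) }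
  refine ⟨ℓ, ?_, fun ℓ' hℓ' => LinearMap.ext fun p => ?_⟩
  · ext x
    constructor
    · intro hx
      let p : ↥(S.map proj02) := ⟨proj02 x, mem_map_of_mem hx⟩
      have hxK := eq_of_mem_Kdiag (hSK hx)
      have hfx : x.1.2 = f p := eq_of_diag_mem_of_mem hS (hxK ▸ hx) (hf p)
      exact ⟨p, hxK.trans (by rw [hfx]; rfl)⟩
    · rintro ⟨p, rfl⟩
      exact hf p
  · have hp : ((p.val.1, ℓ' p), (ℓ' p, p.val.2)) ∈ S := by
      rw [← SetLike.mem_coe, hℓ']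
      exact ⟨p, rfl⟩
    exact eq_of_diag_mem_of_mem hS hp (hf p)

end

theorem statement8_general {V₀ V₁ V₂ : Type*}
    [AddCommGroup V₀] [Module ℝ V₀]
    [AddCommGroup V₁] [Module ℝ V₁]
    [AddCommGroup V₂] [Module ℝ V₂]
    (ω₀ : V₀ →ₗ[ℝ] V₀ →ₗ[ℝ] ℝ) (ω₁ : V₁ →ₗ[ℝ] V₁ →ₗ[ℝ] ℝ) (ω₂ : V₂ →ₗ[ℝ] V₂ →ₗ[ℝ] ℝ)
    (hω₁ : IsSymplecticForm ω₁)
    (Λ : Submodule ℝ ((V₀ × V₁) × (V₁ × V₂)))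
    (hΛ : IsLagrangian (form0112 ω₀ ω₁ ω₂) Λ)
    (htrans : Λ ⊔ Kdiag = ⊤) :
    (∃! ℓ : ↥(Submodule.map proj02 (Λ ⊓ Kdiag)) →ₗ[ℝ] V₁,
        (↑(Λ ⊓ Kdiag) : Set ((V₀ × V₁) × (V₁ × V₂)))
          = {x | ∃ p : ↥(Submodule.map proj02 (Λ ⊓ Kdiag)),
                x = ((p.val.1, ℓ p), (ℓ p, p.val.2))}) ∧
    ∀ p ∈ Submodule.map proj02 (Λ ⊓ Kdiag),
      ∃! v₁ : V₁, ((p.1, v₁), (v₁, p.2)) ∈ Λ := by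
  have hdiag : ∀ v : V₁, (((0 : V₀), v), (v, (0 : V₂))) ∈ Λ ⊓ Kdiag → v = 0 :=
    fun _ hv => eq_zero_of_diag_mem hω₁ hΛ.le htrans hv.1
  refine ⟨existsUnique_linearMap_eq_graph inf_le_right hdiag, fun p hp => ?_⟩
  obtain ⟨v, hv, huniq⟩ := existsUnique_mem_of_mem_map_proj02 inf_le_right hdiag hp
  exact ⟨v, hv.1, fun w hw => huniq w ⟨hw, rfl⟩⟩

theorem statement8 {V₀ V₁ V₂ : Type*}
    [AddCommGroup V₀] [Module ℝ V₀] [FiniteDimensional ℝ V₀]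
    [AddCommGroup V₁] [Module ℝ V₁] [FiniteDimensional ℝ V₁]
    [AddCommGroup V₂] [Module ℝ V₂] [FiniteDimensional ℝ V₂]
    (ω₀ : V₀ →ₗ[ℝ] V₀ →ₗ[ℝ] ℝ) (ω₁ : V₁ →ₗ[ℝ] V₁ →ₗ[ℝ] ℝ) (ω₂ : V₂ →ₗ[ℝ] V₂ →ₗ[ℝ] ℝ)
    (hω₀ : IsSymplecticForm ω₀) (hω₁ : IsSymplecticForm ω₁) (hω₂ : IsSymplecticForm ω₂)
    (Λ : Submodule ℝ ((V₀ × V₁) × (V₁ × V₂)))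
    (hΛ : IsLagrangian (form0112 ω₀ ω₁ ω₂) Λ)
    (htrans : Λ ⊔ Kdiag = ⊤) :
    (∃! ℓ : ↥(Submodule.map proj02 (Λ ⊓ Kdiag)) →ₗ[ℝ] V₁,
        (↑(Λ ⊓ Kdiag) : Set ((V₀ × V₁) × (V₁ × V₂)))
          = {x | ∃ p : ↥(Submodule.map proj02 (Λ ⊓ Kdiag)),
                x = ((p.val.1, ℓ p), (ℓ p, p.val.2))}) ∧
    ∀ p ∈ Submodule.map proj02 (Λ ⊓ Kdiag),
      ∃! v₁ : V₁, ((p.1, v₁), (v₁, p.2)) ∈ Λ :=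
  statement8_general ω₀ ω₁ ω₂ hω₁ Λ hΛ htrans
end

section
/- Let (V₀, ω₀), (V₁, ω₁), (V₂, ω₂) be symplectic vector spaces and let Λ ⊆ V₀ × V₁ × V₁ × V₂ be a Lagrangian subspace for ω₀₁₁₂ satisfying Λ + K = V₀ × V₁ × V₁ × V₂. Then dim(Λ ∩ K) = (dim V₀ + dim V₂)/2, and for every subspace U ⊆ Λ with Λ = (Λ ∩ K) ⊕ U there exist unique linear maps j₀ : V₁ → V₀, j₁ : V₁ → V₁, j₂ : V₁ → V₂ such that U = {(j₀(w), w + j₁(w), −w + j₁(w), j₂(w)) : w ∈ V₁}. -/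
open LinearMap Submodule

/-! Since `ω₀₁₁₂` is nondegenerate, a Lagrangian `Λ` has half the total dimension, and `K` is the
kernel of the surjection `x ↦ (x₁ - x₁') / 2` onto `V₁` (`x₁, x₁'` the two `V₁`-components);
the dimension of `Λ ∩ K` then follows from `dim (Λ + K) + dim (Λ ∩ K) = dim Λ + dim K`.
A complement `U` of `Λ ∩ K` in `Λ` is a complement of `K` in the whole space because `Λ + K` is
everything, so that surjection restricts to an isomorphism `U ≃ V₁`. Its inverse, read in
coordinates, is the parametrisation by `(j₀, j₁, j₂)`; two such parametrisations of `U` differ by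
a map into `U ∩ K = 0`. -/

theorem isCompl_of_inf_eq_bot_of_sup_eq {α : Type*} [Lattice α] [BoundedOrder α]
    {Λ K U : α} (hdisj : Λ ⊓ K ⊓ U = ⊥) (hsup : Λ ⊓ K ⊔ U = Λ) (htop : Λ ⊔ K = ⊤) :
    IsCompl U K := by
  have hUΛ : U ≤ Λ := hsup ▸ le_sup_right
  refine ⟨disjoint_iff.mpr (eq_bot_iff.mpr ?_), codisjoint_iff.mpr (eq_top_iff.mpr ?_)⟩
  · exact hdisj ▸ le_inf (le_inf (inf_le_left.trans hUΛ) inf_le_right) inf_le_left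
  · calc ⊤ = Λ ⊓ K ⊔ U ⊔ K := by rw [hsup, htop]
      _ ≤ U ⊔ K := sup_le (sup_le (inf_le_right.trans le_sup_right) le_sup_left) le_sup_right

namespace LinearMap

variable {R M N P : Type*} [Ring R] [AddCommGroup M] [Module R M] [AddCommGroup N] [Module R N]
  [AddCommGroup P] [Module R P] {f : M →ₗ[R] N} {U : Submodule R M}

theorem bijective_domRestrict_of_isCompl_ker (hf : Function.Surjective f)
    (hU : IsCompl U (ker f)) : Function.Bijective (f.domRestrict U) := by
  refine ⟨(injective_iff_map_eq_zero _).mpr fun u hu => ?_, fun n => ?_⟩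
  · exact Subtype.ext ((Submodule.disjoint_def.mp hU.disjoint) u u.2 hu)
  · obtain ⟨m, rfl⟩ := hf n
    obtain ⟨u, hu, k, hk, rfl⟩ := Submodule.mem_sup.mp (hU.sup_eq_top ▸ mem_top : m ∈ U ⊔ ker f)
    exact ⟨⟨u, hu⟩, by simp [mem_ker.mp hk]⟩

theorem exists_rightInverse_range_eq_of_isCompl_ker (hf : Function.Surjective f)
    (hU : IsCompl U (ker f)) : ∃ g : N →ₗ[R] M, f ∘ₗ g = id ∧ range g = U := by
  let e := LinearEquiv.ofBijective _ (bijective_domRestrict_of_isCompl_ker hf hU)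
  refine ⟨U.subtype ∘ₗ e.symm.toLinearMap, ?_, ?_⟩
  · ext n
    exact e.apply_symm_apply n
  · rw [range_comp, LinearEquiv.range, Submodule.map_top, range_subtype]

theorem eq_of_comp_eq_of_disjoint_ker (hU : Disjoint U (ker f)) {g g' : P →ₗ[R] M}
    (hg : range g ≤ U) (hg' : range g' ≤ U) (h : f ∘ₗ g = f ∘ₗ g') : g = g' := by
  ext p
  rw [← sub_eq_zero]
  refine Submodule.disjoint_def.mp hU _ (sub_mem (hg ⟨p, rfl⟩) (hg' ⟨p, rfl⟩)) ?_
  rw [mem_ker, map_sub, sub_eq_zero]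
  exact LinearMap.congr_fun h p

end LinearMap

namespace IsSymplecticForm

variable {V : Type*} [AddCommGroup V] [Module ℝ V] {ω : V →ₗ[ℝ] V →ₗ[ℝ] ℝ}

theorem isRefl (hω : IsSymplecticForm ω) : ω.IsRefl :=
  IsAlt.isRefl hω.alternating

theorem nondegenerate (hω : IsSymplecticForm ω) : BilinForm.Nondegenerate ω :=
  hω.isRefl.nondegenerate_iff_separatingLeft.mpr hω.nondeg

theorem symplComp_eq_orthogonal (hω : IsSymplecticForm ω) (W : Submodule ℝ V) :
    symplComp ω W = BilinForm.orthogonal ω W := by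
  ext v
  exact ⟨fun hv w hw => hω.isRefl v w (hv w hw), fun hv w hw => hω.isRefl w v (hv w hw)⟩

theorem two_mul_finrank_of_isLagrangian [FiniteDimensional ℝ V] (hω : IsSymplecticForm ω)
    {Λ : Submodule ℝ V} (hΛ : IsLagrangian ω Λ) :
    2 * Module.finrank ℝ Λ = Module.finrank ℝ V := by
  have h := BilinForm.finrank_orthogonal hω.nondegenerate Λ
  rw [← hω.symplComp_eq_orthogonal, ← hΛ] at h
  have := Λ.finrank_le
  omega

variable {V₀ V₁ V₂ : Type*} [AddCommGroup V₀] [Module ℝ V₀] [AddCommGroup V₁] [Module ℝ V₁]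
  [AddCommGroup V₂] [Module ℝ V₂] {ω₀ : V₀ →ₗ[ℝ] V₀ →ₗ[ℝ] ℝ} {ω₁ : V₁ →ₗ[ℝ] V₁ →ₗ[ℝ] ℝ}
  {ω₂ : V₂ →ₗ[ℝ] V₂ →ₗ[ℝ] ℝ}

theorem form0112 (hω₀ : IsSymplecticForm ω₀) (hω₁ : IsSymplecticForm ω₁)
    (hω₂ : IsSymplecticForm ω₂) : IsSymplecticForm (form0112 ω₀ ω₁ ω₂) where
  alternating x := by
    simp [_root_.form0112, hω₀.alternating, hω₁.alternating, hω₂.alternating]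
  nondeg x hx := by
    have h₀ : x.1.1 = 0 := hω₀.nondeg _ fun a => by
      simpa [_root_.form0112] using hx ((a, 0), (0, 0))
    have h₁ : x.1.2 = 0 := hω₁.nondeg _ fun a => by
      simpa [_root_.form0112] using hx ((0, a), (0, 0))
    have h₂ : x.2.1 = 0 := hω₁.nondeg _ fun a => by
      simpa [_root_.form0112] using hx ((0, 0), (a, 0))
    have h₃ : x.2.2 = 0 := hω₂.nondeg _ fun a => by
      simpa [_root_.form0112] using hx ((0, 0), (0, a))
    exact Prod.ext (Prod.ext h₀ h₁) (Prod.ext h₂ h₃)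

end IsSymplecticForm

section Kdiag

variable {V₀ V₁ V₂ : Type*} [AddCommGroup V₀] [Module ℝ V₀] [AddCommGroup V₁] [Module ℝ V₁]
  [AddCommGroup V₂] [Module ℝ V₂]

/-- In `V₁ × V₁ = Δ₁ ⊕ {(w, -w)}` the pair `(a, b)` has antidiagonal part `(w, -w)` with
`w = (a - b) / 2`. -/
noncomputable def antidiagCoord : ((V₀ × V₁) × (V₁ × V₂)) →ₗ[ℝ] V₁ :=
  (2 : ℝ)⁻¹ • (snd ℝ V₀ V₁ ∘ₗ fst ℝ _ _ - fst ℝ V₁ V₂ ∘ₗ snd ℝ _ _)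

theorem antidiagCoord_apply (x : (V₀ × V₁) × (V₁ × V₂)) :
    antidiagCoord x = (2 : ℝ)⁻¹ • (x.1.2 - x.2.1) :=
  rfl

theorem ker_antidiagCoord : ker (antidiagCoord (V₀ := V₀) (V₁ := V₁) (V₂ := V₂)) = Kdiag := by
  ext x
  rw [mem_ker, antidiagCoord_apply, smul_eq_zero_iff_right (by norm_num), sub_eq_zero]
  rfl

theorem antidiagCoord_surjective :
    Function.Surjective (antidiagCoord (V₀ := V₀) (V₁ := V₁) (V₂ := V₂)) := fun w =>
  ⟨((0, w), (-w, 0)), by simp only [antidiagCoord_apply]; module⟩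

theorem finrank_Kdiag_add_finrank [FiniteDimensional ℝ V₀] [FiniteDimensional ℝ V₁]
    [FiniteDimensional ℝ V₂] :
    Module.finrank ℝ (Kdiag : Submodule ℝ ((V₀ × V₁) × (V₁ × V₂))) + Module.finrank ℝ V₁ =
      Module.finrank ℝ ((V₀ × V₁) × (V₁ × V₂)) := by
  have h := finrank_range_add_finrank_ker (antidiagCoord (V₀ := V₀) (V₁ := V₁) (V₂ := V₂))
  rw [range_eq_top.mpr antidiagCoord_surjective, finrank_top, ker_antidiagCoord] at h
  omega

theorem two_mul_finrank_inf_Kdiag [FiniteDimensional ℝ V₀] [FiniteDimensional ℝ V₁]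
    [FiniteDimensional ℝ V₂] {Λ : Submodule ℝ ((V₀ × V₁) × (V₁ × V₂))}
    (hΛ : 2 * Module.finrank ℝ Λ = Module.finrank ℝ ((V₀ × V₁) × (V₁ × V₂)))
    (htrans : Λ ⊔ Kdiag = ⊤) :
    2 * Module.finrank ℝ ↥(Λ ⊓ Kdiag) = Module.finrank ℝ V₀ + Module.finrank ℝ V₂ := by
  have hsum := Submodule.finrank_sup_add_finrank_inf_eq Λ Kdiag
  rw [htrans, finrank_top] at hsum
  have hK := finrank_Kdiag_add_finrank (V₀ := V₀) (V₁ := V₁) (V₂ := V₂)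
  simp only [Module.finrank_prod] at hΛ hsum hK ⊢
  omega

def antidiagGraph (j : (V₁ →ₗ[ℝ] V₀) × (V₁ →ₗ[ℝ] V₁) × (V₁ →ₗ[ℝ] V₂)) :
    V₁ →ₗ[ℝ] (V₀ × V₁) × (V₁ × V₂) where
  toFun w := ((j.1 w, w + j.2.1 w), (-w + j.2.1 w, j.2.2 w))
  map_add' v w := by simp only [map_add, Prod.mk_add_mk]; abel_nf
  map_smul' c w := by simp [smul_add]

@[simp]
theorem antidiagGraph_apply (j : (V₁ →ₗ[ℝ] V₀) × (V₁ →ₗ[ℝ] V₁) × (V₁ →ₗ[ℝ] V₂)) (w : V₁) :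
    antidiagGraph j w = ((j.1 w, w + j.2.1 w), (-w + j.2.1 w, j.2.2 w)) :=
  rfl

theorem antidiagCoord_comp_antidiagGraph
    (j : (V₁ →ₗ[ℝ] V₀) × (V₁ →ₗ[ℝ] V₁) × (V₁ →ₗ[ℝ] V₂)) :
    antidiagCoord ∘ₗ antidiagGraph j = LinearMap.id := by
  ext w
  simp only [comp_apply, antidiagGraph_apply, antidiagCoord_apply, id_apply]
  module

theorem antidiagGraph_injective :
    Function.Injective (antidiagGraph (V₀ := V₀) (V₁ := V₁) (V₂ := V₂)) := by
  intro j j' h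
  have h' w := LinearMap.congr_fun h w
  simp only [antidiagGraph_apply, Prod.mk.injEq, add_right_inj] at h'
  exact Prod.ext (LinearMap.ext fun w => (h' w).1.1)
    (Prod.ext (LinearMap.ext fun w => (h' w).1.2) (LinearMap.ext fun w => (h' w).2.2))

theorem exists_antidiagGraph_eq {g : V₁ →ₗ[ℝ] (V₀ × V₁) × (V₁ × V₂)}
    (hg : antidiagCoord ∘ₗ g = LinearMap.id) : ∃ j, antidiagGraph j = g := by
  refine ⟨(fst ℝ _ _ ∘ₗ fst ℝ _ _ ∘ₗ g, snd ℝ _ _ ∘ₗ fst ℝ _ _ ∘ₗ g - LinearMap.id,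
    snd ℝ _ _ ∘ₗ snd ℝ _ _ ∘ₗ g), LinearMap.ext fun w => ?_⟩
  have hw : (2 : ℝ)⁻¹ • ((g w).1.2 - (g w).2.1) = w := LinearMap.congr_fun hg w
  refine Prod.ext (Prod.ext rfl ?_) (Prod.ext ?_ rfl) <;>
    simp only [antidiagGraph_apply, LinearMap.sub_apply, LinearMap.comp_apply, LinearMap.fst_apply,
      LinearMap.snd_apply, LinearMap.id_apply]
  · abel
  · linear_combination (norm := module) (2 : ℝ) • hw

theorem coe_range_antidiagGraph (j : (V₁ →ₗ[ℝ] V₀) × (V₁ →ₗ[ℝ] V₁) × (V₁ →ₗ[ℝ] V₂)) :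
    (range (antidiagGraph j) : Set ((V₀ × V₁) × (V₁ × V₂))) =
      {x | ∃ w : V₁, x = ((j.1 w, w + j.2.1 w), (-w + j.2.1 w, j.2.2 w))} := by
  ext x
  simp [eq_comm]

theorem existsUnique_range_antidiagGraph_eq {U : Submodule ℝ ((V₀ × V₁) × (V₁ × V₂))}
    (hU : IsCompl U Kdiag) : ∃! j, range (antidiagGraph j) = U := by
  rw [← ker_antidiagCoord] at hU
  obtain ⟨g, hg, rfl⟩ :=
    exists_rightInverse_range_eq_of_isCompl_ker antidiagCoord_surjective hU
  obtain ⟨j, rfl⟩ := exists_antidiagGraph_eq hg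
  refine ⟨j, rfl, fun j' hj' => antidiagGraph_injective ?_⟩
  exact eq_of_comp_eq_of_disjoint_ker hU.disjoint hj'.le le_rfl
    (by rw [antidiagCoord_comp_antidiagGraph, antidiagCoord_comp_antidiagGraph])

end Kdiag

theorem statement9 {V₀ V₁ V₂ : Type*}
    [AddCommGroup V₀] [Module ℝ V₀] [FiniteDimensional ℝ V₀]
    [AddCommGroup V₁] [Module ℝ V₁] [FiniteDimensional ℝ V₁]
    [AddCommGroup V₂] [Module ℝ V₂] [FiniteDimensional ℝ V₂]
    (ω₀ : V₀ →ₗ[ℝ] V₀ →ₗ[ℝ] ℝ) (ω₁ : V₁ →ₗ[ℝ] V₁ →ₗ[ℝ] ℝ) (ω₂ : V₂ →ₗ[ℝ] V₂ →ₗ[ℝ] ℝ)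
    (hω₀ : IsSymplecticForm ω₀) (hω₁ : IsSymplecticForm ω₁) (hω₂ : IsSymplecticForm ω₂)
    (Λ : Submodule ℝ ((V₀ × V₁) × (V₁ × V₂)))
    (hΛ : IsLagrangian (form0112 ω₀ ω₁ ω₂) Λ)
    (htrans : Λ ⊔ Kdiag = ⊤) :
    2 * Module.finrank ℝ ↥(Λ ⊓ Kdiag) = Module.finrank ℝ V₀ + Module.finrank ℝ V₂ ∧
    ∀ U : Submodule ℝ ((V₀ × V₁) × (V₁ × V₂)),
      U ≤ Λ → (Λ ⊓ Kdiag) ⊓ U = ⊥ → (Λ ⊓ Kdiag) ⊔ U = Λ →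
      ∃! j : (V₁ →ₗ[ℝ] V₀) × (V₁ →ₗ[ℝ] V₁) × (V₁ →ₗ[ℝ] V₂),
        (↑U : Set ((V₀ × V₁) × (V₁ × V₂)))
          = {x | ∃ w : V₁, x = ((j.1 w, w + j.2.1 w), (-w + j.2.1 w, j.2.2 w))} := by
  refine ⟨two_mul_finrank_inf_Kdiag
    ((hω₀.form0112 hω₁ hω₂).two_mul_finrank_of_isLagrangian hΛ) htrans, ?_⟩
  intro U _ hdisj hsup
  simp only [← coe_range_antidiagGraph, SetLike.coe_set_eq, eq_comm (a := U)]
  exact existsUnique_range_antidiagGraph_eq (isCompl_of_inf_eq_bot_of_sup_eq hdisj hsup htrans)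
end
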